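/- Let ([p*],[u*]) be an optimal process for the pro-rata control problem with η∈[0,1) and γ>0. If u*_i(t)>0 for some node i and period t, then w*_i(t+1)=0 and, moreover, w*_i(s)=0 for every s∈{0,…,t}, where w* is the net worth sequence generated by the optimal process. -/

import Mathlib

open Finset

noncomputable section

/-- The relative (pro-rata) liability matrix `A` built from the nominal liability matrix. -/
def proRata {n : ℕ} (Pbar : Matrix (Fin n) (Fin n) ℝ) : Matrix (Fin n) (Fin n) ℝ :=
  fun i j =>
    if 0 < ∑ k, Pbar i k then Pbar i j / ∑ k, Pbar i k
    else if i = j then 1 else 0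

/-- Residual liability vectors: `p̄(0) = p̄`, `p̄(t+1) = α (p̄(t) - p(t))`. -/
def resLiabVec {n : ℕ} (α : ℝ) (pbar : Fin n → ℝ)
    (p : ℕ → Fin n → ℝ) : ℕ → Fin n → ℝ
  | 0 => pbar
  | t + 1 => fun i => α * (resLiabVec α pbar p t i - p t i)

/-- Net worths: `w(0) = 0`, `w(t+1) = w(t) + c(t) + Aᵀ p(t) - p(t)`. -/
def netWorthVec {n : ℕ} (A : Matrix (Fin n) (Fin n) ℝ)
    (c p : ℕ → Fin n → ℝ) : ℕ → Fin n → ℝ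
  | 0 => fun _ => 0
  | t + 1 => fun i => netWorthVec A c p t i + c t i + (∑ j, A j i * p t j) - p t i

/-- Cumulative injected cash `B(t) = Σ_{k=0}^{t} 1ᵀ u(k)`. -/
def budget {n : ℕ} (u : ℕ → Fin n → ℝ) (t : ℕ) : ℝ :=
  ∑ k ∈ range (t + 1), ∑ i, u k i

/-- Feasibility of a process `([p],[u])` for the pro-rata control problem. -/
def FeasiblePro {n : ℕ} (T : ℕ) (α : ℝ) (pbar : Fin n → ℝ)
    (A : Matrix (Fin n) (Fin n) ℝ) (e : ℕ → Fin n → ℝ) (F : ℕ → ℝ)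
    (p u : ℕ → Fin n → ℝ) : Prop :=
  ∀ t, t < T →
    (∀ i, 0 ≤ p t i) ∧ (∀ i, 0 ≤ u t i) ∧
    (∀ i, p t i ≤ resLiabVec α pbar p t i) ∧
    (∀ i, 0 ≤ netWorthVec A (fun s i => e s i + u s i) p (t + 1) i) ∧
    budget u t ≤ F t

/-- Cost `J([p],[u])` of the pro-rata control problem. -/
def costPro {n : ℕ} (T : ℕ) (α η γ : ℝ) (pbar : Fin n → ℝ)
    (p u : ℕ → Fin n → ℝ) : ℝ :=
  (1 - η) * ∑ t ∈ range T, ∑ i, (resLiabVec α pbar p t i - p t i)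
    + η * ∑ i, resLiabVec α pbar p T i
    + γ * budget u (T - 1)

/-- Optimality for the pro-rata control problem. -/
def OptimalPro {n : ℕ} (T : ℕ) (α η γ : ℝ) (pbar : Fin n → ℝ)
    (A : Matrix (Fin n) (Fin n) ℝ) (e : ℕ → Fin n → ℝ) (F : ℕ → ℝ)
    (p u : ℕ → Fin n → ℝ) : Prop :=
  FeasiblePro T α pbar A e F p u ∧
  ∀ p' u', FeasiblePro T α pbar A e F p' u' →
    costPro T α η γ pbar p u ≤ costPro T α η γ pbar p' u'

/-! The control problem is a linear program, so at an optimum no direction that keeps every active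
constraint satisfied can lower the cost; both claims follow by exhibiting one that would.

If `w_i(t+1) > 0`, move a little injection `δ` of node `i` from period `t` to period `t+1`. This is
feasible and saves `γ δ` when `t + 1 = T`; otherwise it leaves the cost unchanged, so the new process
is again optimal. By downward induction on `t` the net worth of `i` at `t + 1` then vanishes in the new
process, although it equals `w_i(t+1) - δ > 0`.

If `w_i(t+1) = 0` but `w_i(s) > 0` for some `s ≤ t`, then `i` pays at `t` and at some period
`a + 1 ∈ [s, t]` where its net worth is positive. Let `i` pay `δ` at `a` instead of `a + 1`, pay the
interest this saves less at `t`, and hand the same amount of its injection at `t` to its creditors.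
Net worths change only at `a + 1` and cumulative injections not at all, while the unpaid liabilities
`p̄(k) - p(k)` never increase, drop by `δ` at `a`, and `p̄(T)` is unchanged. -/

open Filter Topology

section Linearity

variable {n : ℕ}

theorem resLiabVec_eq_sum (α : ℝ) (pbar : Fin n → ℝ) (p : ℕ → Fin n → ℝ) (s : ℕ) (l : Fin n) :
    resLiabVec α pbar p s l = α ^ s * pbar l - ∑ k ∈ range s, α ^ (s - k) * p k l := by
  induction s with
  | zero => simp [resLiabVec]
  | succ s ih =>
    have hpow : ∀ k ∈ range s, α ^ (s + 1 - k) * p k l = α * (α ^ (s - k) * p k l) := by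
      intro k hk
      rw [Nat.sub_add_comm (mem_range.1 hk).le, pow_succ]
      ring
    simp only [resLiabVec, ih, sum_range_succ, sum_congr rfl hpow, ← mul_sum,
      Nat.add_sub_cancel_left, pow_succ]
    ring

theorem netWorthVec_eq_sum (A : Matrix (Fin n) (Fin n) ℝ) (c p : ℕ → Fin n → ℝ) (s : ℕ)
    (l : Fin n) :
    netWorthVec A c p s l = ∑ k ∈ range s, (c k l + ∑ j, A j l * p k j - p k l) := by
  induction s with
  | zero => simp [netWorthVec]
  | succ s ih => simp only [netWorthVec, ih, sum_range_succ]; ring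

theorem resLiabVec_add_smul (α δ : ℝ) (pbar : Fin n → ℝ) (p q : ℕ → Fin n → ℝ) (s : ℕ) (l : Fin n) :
    resLiabVec α pbar (p + δ • q) s l = resLiabVec α pbar p s l + δ * resLiabVec α 0 q s l := by
  simp only [resLiabVec_eq_sum, Pi.add_apply, Pi.smul_apply, smul_eq_mul, Pi.zero_apply, mul_zero,
    zero_sub, mul_add, sum_add_distrib, mul_neg, mul_sum]
  ring_nf

theorem netWorthVec_add_smul (A : Matrix (Fin n) (Fin n) ℝ) (δ : ℝ) (c c' p q : ℕ → Fin n → ℝ)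
    (s : ℕ) (l : Fin n) :
    netWorthVec A (c + δ • c') (p + δ • q) s l
      = netWorthVec A c p s l + δ * netWorthVec A c' q s l := by
  simp only [netWorthVec_eq_sum, Pi.add_apply, Pi.smul_apply, smul_eq_mul, mul_sum,
    ← sum_add_distrib]
  refine sum_congr rfl fun k _ => ?_
  simp only [mul_add, sum_add_distrib, mul_sub, mul_sum]
  ring_nf

theorem netWorthVec_add_add_smul (A : Matrix (Fin n) (Fin n) ℝ) (δ : ℝ) (e u v p q : ℕ → Fin n → ℝ)
    (s : ℕ) (l : Fin n) :
    netWorthVec A (fun s i => e s i + (u + δ • v) s i) (p + δ • q) s l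
      = netWorthVec A (fun s i => e s i + u s i) p s l + δ * netWorthVec A v q s l := by
  rw [← netWorthVec_add_smul]
  congr
  funext s i
  simp [add_assoc]

theorem budget_add_smul (δ : ℝ) (u v : ℕ → Fin n → ℝ) (t : ℕ) :
    budget (u + δ • v) t = budget u t + δ * budget v t := by
  simp only [budget, Pi.add_apply, Pi.smul_apply, smul_eq_mul, sum_add_distrib, mul_sum]

theorem costPro_add_smul (T : ℕ) (α η γ δ : ℝ) (pbar : Fin n → ℝ) (p q u v : ℕ → Fin n → ℝ) :
    costPro T α η γ pbar (p + δ • q) (u + δ • v)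
      = costPro T α η γ pbar p u + δ * costPro T α η γ 0 q v := by
  simp only [costPro, resLiabVec_add_smul, budget_add_smul, Pi.add_apply, Pi.smul_apply,
    smul_eq_mul, mul_add, mul_sub, sum_add_distrib, sum_sub_distrib, mul_sum]
  ring_nf

end Linearity

theorem eventually_nonneg_add_mul {x y : ℝ} (hx : 0 ≤ x) (h : 0 < x ∨ 0 ≤ y) :
    ∀ᶠ δ in 𝓝[>] (0 : ℝ), 0 ≤ x + δ * y := by
  rcases h with hx' | hy
  · have hlim : Tendsto (fun δ : ℝ => x + δ * y) (𝓝 0) (𝓝 x) :=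
      (by fun_prop : Continuous fun δ : ℝ => x + δ * y).tendsto' 0 x (by simp)
    exact nhdsWithin_le_nhds ((hlim.eventually (lt_mem_nhds hx')).mono fun _ => le_of_lt)
  · filter_upwards [self_mem_nhdsWithin] with δ hδ using add_nonneg hx (mul_nonneg (le_of_lt hδ) hy)

section Directions

variable {n : ℕ} {T : ℕ} {α η γ : ℝ} {pbar : Fin n → ℝ} {A : Matrix (Fin n) (Fin n) ℝ}
  {e : ℕ → Fin n → ℝ} {F : ℕ → ℝ} {p u q v : ℕ → Fin n → ℝ}

/-- The constraints of the problem are affine, so `(q, v)` keeps `(p, u) + δ • (q, v)` feasible for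
small `δ > 0` as soon as it does not decrease any constraint that is active at `(p, u)`. -/
def IsAdmissibleDirection (T : ℕ) (α : ℝ) (pbar : Fin n → ℝ) (A : Matrix (Fin n) (Fin n) ℝ)
    (e : ℕ → Fin n → ℝ) (F : ℕ → ℝ) (p u q v : ℕ → Fin n → ℝ) : Prop :=
  ∀ k, k < T →
    (∀ l, 0 < p k l ∨ 0 ≤ q k l) ∧ (∀ l, 0 < u k l ∨ 0 ≤ v k l) ∧
    (∀ l, p k l < resLiabVec α pbar p k l ∨ q k l ≤ resLiabVec α 0 q k l) ∧
    (∀ l, 0 < netWorthVec A (fun s i => e s i + u s i) p (k + 1) l ∨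
      0 ≤ netWorthVec A v q (k + 1) l) ∧
    (budget u k < F k ∨ budget v k ≤ 0)

theorem FeasiblePro.eventually_add_smul (hf : FeasiblePro T α pbar A e F p u)
    (hd : IsAdmissibleDirection T α pbar A e F p u q v) :
    ∀ᶠ δ in 𝓝[>] (0 : ℝ), FeasiblePro T α pbar A e F (p + δ • q) (u + δ • v) := by
  have hk : ∀ k ∈ range T, ∀ᶠ δ in 𝓝[>] (0 : ℝ),
      (∀ l, 0 ≤ (p + δ • q) k l) ∧ (∀ l, 0 ≤ (u + δ • v) k l) ∧
      (∀ l, (p + δ • q) k l ≤ resLiabVec α pbar (p + δ • q) k l) ∧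
      (∀ l, 0 ≤ netWorthVec A (fun s i => e s i + (u + δ • v) s i) (p + δ • q) (k + 1) l) ∧
      budget (u + δ • v) k ≤ F k := by
    intro k hk
    obtain ⟨hp, hu, hres, hw, hB⟩ := hf k (mem_range.1 hk)
    obtain ⟨dp, du, dres, dw, dB⟩ := hd k (mem_range.1 hk)
    filter_upwards [eventually_all.2 fun l => eventually_nonneg_add_mul (hp l) (dp l),
      eventually_all.2 fun l => eventually_nonneg_add_mul (hu l) (du l),
      eventually_all.2 fun l => eventually_nonneg_add_mul (sub_nonneg.2 (hres l))
        ((dres l).imp sub_pos.2 sub_nonneg.2),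
      eventually_all.2 fun l => eventually_nonneg_add_mul (hw l) (dw l),
      eventually_nonneg_add_mul (sub_nonneg.2 hB) (dB.imp sub_pos.2 neg_nonneg.2)]
      with δ hp' hu' hres' hw' hB'
    refine ⟨fun l => ?_, fun l => ?_, fun l => ?_, fun l => ?_, ?_⟩
    · simpa using hp' l
    · simpa using hu' l
    · have := hres' l
      simp only [resLiabVec_add_smul, Pi.add_apply, Pi.smul_apply, smul_eq_mul]
      linarith
    · simpa only [netWorthVec_add_add_smul] using hw' l
    · rw [budget_add_smul]
      linarith
  filter_upwards [(eventually_all_finset _).2 hk] with δ hδ k hkT using hδ k (mem_range.2 hkT)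

theorem OptimalPro.costPro_nonneg_of_isAdmissibleDirection
    (hopt : OptimalPro T α η γ pbar A e F p u) (hd : IsAdmissibleDirection T α pbar A e F p u q v) :
    0 ≤ costPro T α η γ 0 q v := by
  obtain ⟨δ, hfeas, hδ⟩ := ((hopt.1.eventually_add_smul hd).and self_mem_nhdsWithin).exists
  have hle := hopt.2 _ _ hfeas
  rw [costPro_add_smul] at hle
  exact (mul_nonneg_iff_of_pos_left hδ).1 (by linarith)

end Directions

namespace FeasiblePro

variable {n : ℕ} {T : ℕ} {α : ℝ} {pbar : Fin n → ℝ} {A : Matrix (Fin n) (Fin n) ℝ}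
  {e : ℕ → Fin n → ℝ} {F : ℕ → ℝ} {p u : ℕ → Fin n → ℝ}

theorem netWorthVec_nonneg (hf : FeasiblePro T α pbar A e F p u) {s : ℕ} (hs : s ≤ T) (l : Fin n) :
    0 ≤ netWorthVec A (fun s i => e s i + u s i) p s l := by
  cases s with
  | zero => exact le_rfl
  | succ k => exact (hf k hs).2.2.2.1 l

theorem netWorthVec_succ_ge (he : ∀ k, k < T → ∀ l, 0 ≤ e k l) (hA : ∀ j l, 0 ≤ A j l)
    (hf : FeasiblePro T α pbar A e F p u) {k : ℕ} (hk : k < T) (l : Fin n) :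
    netWorthVec A (fun s i => e s i + u s i) p k l + u k l - p k l
      ≤ netWorthVec A (fun s i => e s i + u s i) p (k + 1) l := by
  have hin : 0 ≤ ∑ j, A j l * p k j := sum_nonneg fun j _ => mul_nonneg (hA j l) ((hf k hk).1 j)
  simp only [netWorthVec]
  linarith [he k hk l]

theorem exists_pos_payment (he : ∀ k, k < T → ∀ l, 0 ≤ e k l) (hA : ∀ j l, 0 ≤ A j l)
    (hf : FeasiblePro T α pbar A e F p u) {l : Fin n} {s m : ℕ} (hsm : s ≤ m) (hm : m ≤ T)
    (hs : 0 < netWorthVec A (fun s i => e s i + u s i) p s l)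
    (hm0 : netWorthVec A (fun s i => e s i + u s i) p m l = 0) :
    ∃ k, s ≤ k ∧ k < m ∧ 0 < netWorthVec A (fun s i => e s i + u s i) p k l ∧ 0 < p k l := by
  obtain ⟨d, rfl⟩ := Nat.exists_eq_add_of_le hsm
  clear hsm
  induction d generalizing s with
  | zero => simp_all
  | succ d ih =>
    by_cases hp : 0 < p s l
    · exact ⟨s, le_rfl, by omega, hs, hp⟩
    · have hp0 : p s l = 0 := le_antisymm (not_lt.1 hp) ((hf s (by omega)).1 l)
      have hstep := netWorthVec_succ_ge he hA hf (k := s) (by omega) l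
      have hs' : 0 < netWorthVec A (fun s i => e s i + u s i) p (s + 1) l := by
        linarith [(hf s (by omega)).2.1 l]
      obtain ⟨k, hk⟩ := ih hs' (by omega) (by rwa [Nat.add_right_comm])
      exact ⟨k, by omega, by omega, hk.2.2⟩

theorem lt_resLiabVec_of_pos (hf : FeasiblePro T α pbar A e F p u) (hα : 0 ≤ α) {l : Fin n}
    {σ : ℕ} (hσ : σ ≤ T) (hres : 0 < resLiabVec α pbar p σ l) :
    ∀ k, k < σ → p k l < resLiabVec α pbar p k l := by
  induction σ with
  | zero => intro k hk; omega
  | succ σ ih =>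
    have hgap : p σ l < resLiabVec α pbar p σ l := sub_pos.1 (pos_of_mul_pos_right hres hα)
    intro k hk
    rcases Nat.lt_succ_iff_lt_or_eq.1 hk with hk | rfl
    · exact ih (by omega) (lt_of_le_of_lt ((hf σ (by omega)).1 l) hgap) k hk
    · exact hgap

theorem pbar_pos (hf : FeasiblePro T α pbar A e F p u) (hα : 0 ≤ α) {k : ℕ} (hk : k < T)
    {l : Fin n} (hp : 0 < p k l) : 0 < pbar l := by
  have hpaid : 0 ≤ ∑ j ∈ range k, α ^ (k - j) * p j l :=
    sum_nonneg fun j hj => mul_nonneg (pow_nonneg hα _) ((hf j (by simp at hj; omega)).1 l)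
  have hres := (hf k hk).2.2.1 l
  rw [resLiabVec_eq_sum] at hres
  exact pos_of_mul_pos_right (by linarith : 0 < α ^ k * pbar l) (pow_nonneg hα k)

end FeasiblePro

section InjectionDelay

variable {n : ℕ} {T : ℕ} {α : ℝ} {pbar : Fin n → ℝ} {A : Matrix (Fin n) (Fin n) ℝ}
  {e : ℕ → Fin n → ℝ} {F : ℕ → ℝ} {p u : ℕ → Fin n → ℝ}

def injectionDelay (i : Fin n) (t : ℕ) : ℕ → Fin n → ℝ :=
  fun k l => if l = i then (if k = t + 1 then 1 else 0) - if k = t then 1 else 0 else 0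

theorem netWorthVec_injectionDelay (A : Matrix (Fin n) (Fin n) ℝ) (i : Fin n) (t s : ℕ)
    (l : Fin n) :
    netWorthVec A (injectionDelay i t) 0 s l = if s = t + 1 ∧ l = i then -1 else 0 := by
  rw [netWorthVec_eq_sum]
  by_cases hl : l = i
  · simp only [injectionDelay, hl, Pi.zero_apply, mul_zero, sum_const_zero, if_true,
      sum_sub_distrib, sum_ite_eq', mem_range, sub_zero, add_zero, and_true]
    split_ifs <;> first | omega | norm_num
  · simp [injectionDelay, hl]

theorem budget_injectionDelay (i : Fin n) (t k : ℕ) :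
    budget (injectionDelay i t) k = if k = t then -1 else 0 := by
  simp only [budget, injectionDelay, sum_ite_eq', mem_univ, if_true, sum_sub_distrib, mem_range]
  split_ifs <;> first | omega | norm_num

theorem costPro_injectionDelay (T : ℕ) (α η γ : ℝ) (i : Fin n) (t : ℕ) :
    costPro T α η γ 0 0 (injectionDelay i t) = if t = T - 1 then -γ else 0 := by
  simp [costPro, resLiabVec_eq_sum, budget_injectionDelay, eq_comm]

theorem isAdmissibleDirection_injectionDelay {i : Fin n} {t : ℕ} (hu : 0 < u t i)
    (hw : 0 < netWorthVec A (fun s i => e s i + u s i) p (t + 1) i) :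
    IsAdmissibleDirection T α pbar A e F p u 0 (injectionDelay i t) := by
  intro k hk
  refine ⟨fun l => Or.inr le_rfl, fun l => ?_, fun l => Or.inr (by simp [resLiabVec_eq_sum]),
    fun l => ?_, Or.inr (by rw [budget_injectionDelay]; split_ifs <;> norm_num)⟩
  · by_cases h : k = t ∧ l = i
    · obtain ⟨rfl, rfl⟩ := h; exact Or.inl hu
    · right; simp only [injectionDelay]; split_ifs <;> simp_all
  · rw [netWorthVec_injectionDelay]
    by_cases h : k + 1 = t + 1 ∧ l = i
    · obtain ⟨hkt, rfl⟩ := h; left; rwa [hkt]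
    · right; rw [if_neg h]

end InjectionDelay

section PaymentShift

variable {n : ℕ} {T : ℕ} {α η γ : ℝ} {pbar : Fin n → ℝ} {A : Matrix (Fin n) (Fin n) ℝ}
  {e : ℕ → Fin n → ℝ} {F : ℕ → ℝ} {p u : ℕ → Fin n → ℝ} {a t : ℕ}

/-- The interest, compounded up to `t`, saved by paying one unit at `a` instead of `a + 1`. -/
def shiftInterest (α : ℝ) (a t : ℕ) : ℝ := α ^ (t - a) - α ^ (t - (a + 1))

def paymentShift (α : ℝ) (a t : ℕ) (k : ℕ) : ℝ :=
  (if k = a then 1 else 0) - (if k = a + 1 then 1 else 0)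
    - shiftInterest α a t * if k = t then 1 else 0

def advancePayment (i : Fin n) (α : ℝ) (a t : ℕ) : ℕ → Fin n → ℝ :=
  fun k l => if l = i then paymentShift α a t k else 0

def transferInjection (A : Matrix (Fin n) (Fin n) ℝ) (i : Fin n) (α : ℝ) (a t : ℕ) :
    ℕ → Fin n → ℝ :=
  fun k l => if k = t then shiftInterest α a t * (A i l - if l = i then 1 else 0) else 0

theorem shiftInterest_nonneg (hα : 1 ≤ α) (a t : ℕ) : 0 ≤ shiftInterest α a t :=
  sub_nonneg.2 (pow_le_pow_right₀ hα (by omega))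

theorem shiftInterest_mul_pow (hat : a < t) {m : ℕ} (htm : t ≤ m) :
    shiftInterest α a t * α ^ (m - t) = α ^ (m - a) - α ^ (m - (a + 1)) := by
  rw [shiftInterest, sub_mul, ← pow_add, ← pow_add, show t - a + (m - t) = m - a by omega,
    show t - (a + 1) + (m - t) = m - (a + 1) by omega]

theorem sum_pow_mul_paymentShift (α : ℝ) (a t N m : ℕ) :
    ∑ j ∈ range m, α ^ (N - j) * paymentShift α a t j
      = (if a < m then α ^ (N - a) else 0) - (if a + 1 < m then α ^ (N - (a + 1)) else 0)
        - if t < m then shiftInterest α a t * α ^ (N - t) else 0 := by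
  simp only [paymentShift, mul_sub, mul_ite, mul_one, mul_zero, sum_sub_distrib, sum_ite_eq',
    mem_range, mul_comm (α ^ _) (shiftInterest α a t)]

theorem sum_pow_mul_paymentShift_eq_zero (hat : a < t) {m : ℕ} (htm : t < m) :
    ∑ j ∈ range m, α ^ (m - j) * paymentShift α a t j = 0 := by
  rw [sum_pow_mul_paymentShift, if_pos (by omega), if_pos (by omega), if_pos htm,
    shiftInterest_mul_pow hat htm.le, sub_self]

theorem paymentShift_add_sum (hat : a < t) (k : ℕ) :
    paymentShift α a t k + ∑ j ∈ range k, α ^ (k - j) * paymentShift α a t j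
      = if a ≤ k ∧ k < t then α ^ (k - a) - (if a < k then α ^ (k - (a + 1)) else 0) else 0 := by
  have hsum := sum_pow_mul_paymentShift α a t k (k + 1)
  rw [sum_range_succ, Nat.sub_self, pow_zero, one_mul] at hsum
  rw [add_comm, hsum]
  split_ifs <;> first
    | (exfalso; omega)
    | (rw [shiftInterest_mul_pow hat (by omega)]; ring)
    | ring

theorem netWorthVec_transferInjection_advancePayment (A : Matrix (Fin n) (Fin n) ℝ) (i : Fin n)
    (α : ℝ) (a t s : ℕ) (l : Fin n) :
    netWorthVec A (transferInjection A i α a t) (advancePayment i α a t) s l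
      = if s = a + 1 then A i l - (if l = i then 1 else 0) else 0 := by
  have hflow : ∀ k, transferInjection A i α a t k l + ∑ j, A j l * advancePayment i α a t k j
      - advancePayment i α a t k l
      = ((if k = a then 1 else 0) - (if k = a + 1 then 1 else 0))
          * (A i l - if l = i then 1 else 0) := by
    intro k
    simp only [transferInjection, advancePayment, mul_ite, mul_zero, sum_ite_eq', mem_univ, if_true]
    simp only [paymentShift]
    split_ifs <;> ring
  rw [netWorthVec_eq_sum, sum_congr rfl fun k _ => hflow k, ← sum_mul, sum_sub_distrib]
  simp only [sum_ite_eq', mem_range]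
  split_ifs <;> first | (exfalso; omega) | ring

theorem budget_transferInjection (i : Fin n) (hrow : ∑ l, A i l = 1) (α : ℝ) (a t k : ℕ) :
    budget (transferInjection A i α a t) k = 0 := by
  simp [budget, transferInjection, ← mul_sum, sum_sub_distrib, hrow]

theorem resLiabVec_advancePayment (i : Fin n) (α : ℝ) (a t s : ℕ) (l : Fin n) :
    resLiabVec α 0 (advancePayment i α a t) s l
      = if l = i then -∑ k ∈ range s, α ^ (s - k) * paymentShift α a t k else 0 := by
  by_cases hl : l = i <;> simp [resLiabVec_eq_sum, advancePayment, hl]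

theorem advancePayment_sub_resLiabVec (i : Fin n) (α : ℝ) (a t k : ℕ) (l : Fin n) :
    advancePayment i α a t k l - resLiabVec α 0 (advancePayment i α a t) k l
      = if l = i then paymentShift α a t k + ∑ j ∈ range k, α ^ (k - j) * paymentShift α a t j
        else 0 := by
  rw [resLiabVec_advancePayment]
  by_cases hl : l = i <;> simp [advancePayment, hl]

theorem costPro_advancePayment {i : Fin n} (hrow : ∑ l, A i l = 1) (hat : a < t) (htT : t < T) :
    costPro T α η γ 0 (advancePayment i α a t) (transferInjection A i α a t)
      = -(1 - η) * ∑ k ∈ range T,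
          (paymentShift α a t k + ∑ j ∈ range k, α ^ (k - j) * paymentShift α a t j) := by
  have hgap : ∀ k l, resLiabVec α 0 (advancePayment i α a t) k l - advancePayment i α a t k l
      = -(if l = i then paymentShift α a t k + ∑ j ∈ range k, α ^ (k - j) * paymentShift α a t j
          else 0) := fun k l => by
    rw [← advancePayment_sub_resLiabVec]; ring
  simp only [costPro, hgap]
  simp only [resLiabVec_advancePayment, budget_transferInjection i hrow, sum_neg_distrib,
    sum_ite_eq', mem_univ, if_true, sum_pow_mul_paymentShift_eq_zero hat htT]
  ring

theorem one_le_sum_paymentShift_add_sum (hα : 1 ≤ α) (hat : a < t) (haT : a < T) :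
    1 ≤ ∑ k ∈ range T,
      (paymentShift α a t k + ∑ j ∈ range k, α ^ (k - j) * paymentShift α a t j) := by
  have hnonneg : ∀ k ∈ range T,
      0 ≤ paymentShift α a t k + ∑ j ∈ range k, α ^ (k - j) * paymentShift α a t j := by
    intro k _
    rw [paymentShift_add_sum hat]
    split_ifs with h h'
    · exact sub_nonneg.2 (pow_le_pow_right₀ hα (by omega))
    · rw [sub_zero]; positivity
    · exact le_rfl
  calc (1 : ℝ) = paymentShift α a t a + ∑ j ∈ range a, α ^ (a - j) * paymentShift α a t j := by
        rw [paymentShift_add_sum hat, if_pos ⟨le_rfl, hat⟩, if_neg (lt_irrefl a), Nat.sub_self]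
        simp
    _ ≤ _ := single_le_sum hnonneg (mem_range.2 haT)

theorem FeasiblePro.isAdmissibleDirection_advancePayment (hf : FeasiblePro T α pbar A e F p u)
    (hα : 1 ≤ α) (hA : ∀ j l, 0 ≤ A j l) {i : Fin n} (hrow : ∑ l, A i l = 1)
    (hat : a < t) (htT : t < T) (hpa : 0 < p (a + 1) i) (hpt : 0 < p t i) (hu : 0 < u t i)
    (hw : 0 < netWorthVec A (fun s i => e s i + u s i) p (a + 1) i) :
    IsAdmissibleDirection T α pbar A e F p u (advancePayment i α a t)
      (transferInjection A i α a t) := by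
  have hR := shiftInterest_nonneg hα a t
  intro k hk
  refine ⟨fun l => ?_, fun l => ?_, fun l => ?_, fun l => ?_,
    Or.inr (budget_transferInjection i hrow α a t k).le⟩
  · by_cases h : l = i ∧ (k = a + 1 ∨ k = t)
    · obtain ⟨rfl, rfl | rfl⟩ := h
      exacts [Or.inl hpa, Or.inl hpt]
    · right
      simp only [advancePayment, paymentShift]
      split_ifs <;> simp_all
  · by_cases h : k = t ∧ l = i
    · obtain ⟨rfl, rfl⟩ := h
      exact Or.inl hu
    · right
      simp only [transferInjection]
      split_ifs with hkt hli
      · exact absurd ⟨hkt, hli⟩ h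
      · simpa using mul_nonneg hR (hA i l)
      · exact le_rfl
  · by_cases h : l = i ∧ a ≤ k ∧ k < t
    · obtain ⟨rfl, -, hkt⟩ := h
      exact Or.inl (hf.lt_resLiabVec_of_pos (by linarith) htT.le
        (hpt.trans_le ((hf t htT).2.2.1 l)) k hkt)
    · right
      rw [← sub_nonpos, advancePayment_sub_resLiabVec, paymentShift_add_sum hat]
      split_ifs <;> simp_all
  · by_cases h : k = a ∧ l = i
    · obtain ⟨rfl, rfl⟩ := h
      exact Or.inl hw
    · right
      rw [netWorthVec_transferInjection_advancePayment]
      split_ifs with hka hli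
      · exact absurd ⟨by omega, hli⟩ h
      · simpa using hA i l
      · exact le_rfl

end PaymentShift

namespace OptimalPro

variable {n : ℕ} {T : ℕ} {α η γ : ℝ} {pbar : Fin n → ℝ} {A : Matrix (Fin n) (Fin n) ℝ}
  {e : ℕ → Fin n → ℝ} {F : ℕ → ℝ} {p u : ℕ → Fin n → ℝ} {i : Fin n} {t : ℕ}

theorem netWorthVec_succ_eq_zero_of_last (hopt : OptimalPro T α η γ pbar A e F p u) (hγ : 0 < γ)
    (ht : t + 1 = T) (hu : 0 < u t i) :
    netWorthVec A (fun s i => e s i + u s i) p (t + 1) i = 0 := by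
  by_contra hne
  have hw := lt_of_le_of_ne (hopt.1.netWorthVec_nonneg ht.le i) (Ne.symm hne)
  have h :=
    hopt.costPro_nonneg_of_isAdmissibleDirection (isAdmissibleDirection_injectionDelay hu hw)
  rw [costPro_injectionDelay, if_pos (by omega)] at h
  linarith

theorem netWorthVec_succ_eq_zero_of_lt (hopt : OptimalPro T α η γ pbar A e F p u)
    (ht : t + 1 < T) (hu : 0 < u t i)
    (hnext : ∀ u', OptimalPro T α η γ pbar A e F p u' → 0 < u' (t + 1) i →
      netWorthVec A (fun s i => e s i + u' s i) p (t + 1) i = 0) :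
    netWorthVec A (fun s i => e s i + u s i) p (t + 1) i = 0 := by
  by_contra hne
  have hw := lt_of_le_of_ne (hopt.1.netWorthVec_nonneg ht.le i) (Ne.symm hne)
  obtain ⟨δ, ⟨hfeas, hδw⟩, hδ⟩ := (((hopt.1.eventually_add_smul
    (isAdmissibleDirection_injectionDelay hu hw)).and
    (nhdsWithin_le_nhds (eventually_lt_nhds hw))).and self_mem_nhdsWithin).exists
  set u' := u + δ • injectionDelay i t
  have hcost := costPro_add_smul T α η γ δ pbar p 0 u (injectionDelay i t)
  rw [smul_zero, add_zero, costPro_injectionDelay, if_neg (by omega), mul_zero, add_zero] at hcost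
  rw [smul_zero, add_zero] at hfeas
  have hopt' : OptimalPro T α η γ pbar A e F p u' :=
    ⟨hfeas, fun p' u'' h => hcost ▸ hopt.2 p' u'' h⟩
  have hu' : 0 < u' (t + 1) i := by
    simp only [u', Pi.add_apply, Pi.smul_apply, smul_eq_mul, injectionDelay,
      if_neg (Nat.succ_ne_self t), ↓reduceIte, sub_zero, mul_one]
    linarith [(hopt.1 (t + 1) ht).2.1 i, hδ]
  have hw' := netWorthVec_add_add_smul A δ e u (injectionDelay i t) p 0 (t + 1) i
  rw [smul_zero, add_zero, netWorthVec_injectionDelay, if_pos ⟨rfl, rfl⟩, hnext u' hopt' hu'] at hw'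
  linarith

theorem netWorthVec_eq_zero_of_succ_eq_zero (hopt : OptimalPro T α η γ pbar A e F p u)
    (hα : 1 ≤ α) (hη : η < 1) (he : ∀ k, k < T → ∀ l, 0 ≤ e k l) (hA : ∀ j l, 0 ≤ A j l)
    (hrow : ∀ i, 0 < pbar i → ∑ l, A i l = 1) (ht : t < T) (hu : 0 < u t i)
    (hw : netWorthVec A (fun s i => e s i + u s i) p (t + 1) i = 0) :
    ∀ s, s ≤ t + 1 → netWorthVec A (fun s i => e s i + u s i) p s i = 0 := by
  have hf := hopt.1
  intro s hs
  by_contra hne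
  have hpos := lt_of_le_of_ne (hf.netWorthVec_nonneg (by omega) i) (Ne.symm hne)
  have hpt : 0 < p t i := by
    linarith [hf.netWorthVec_succ_ge he hA ht i, hf.netWorthVec_nonneg ht.le i]
  obtain ⟨k, -, hkt, hwk, hpk⟩ := hf.exists_pos_payment he hA hs (by omega) hpos hw
  obtain ⟨a, rfl⟩ : ∃ a, k = a + 1 :=
    Nat.exists_eq_succ_of_ne_zero (by rintro rfl; exact lt_irrefl _ hwk)
  have hrowi := hrow i (hf.pbar_pos (by linarith) ht hpt)
  have h := hopt.costPro_nonneg_of_isAdmissibleDirection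
    (hf.isAdmissibleDirection_advancePayment hα hA hrowi (by omega) ht hpk hpt hu hwk)
  rw [costPro_advancePayment hrowi (by omega) ht] at h
  nlinarith [one_le_sum_paymentShift_add_sum hα (by omega : a < t) (by omega : a < T)]

theorem netWorthVec_eq_zero_of_injection_pos (hopt : OptimalPro T α η γ pbar A e F p u)
    (hα : 1 ≤ α) (hη : η < 1) (hγ : 0 < γ) (he : ∀ k, k < T → ∀ l, 0 ≤ e k l)
    (hA : ∀ j l, 0 ≤ A j l) (hrow : ∀ i, 0 < pbar i → ∑ l, A i l = 1) (ht : t < T)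
    (hu : 0 < u t i) :
    ∀ s, s ≤ t + 1 → netWorthVec A (fun s i => e s i + u s i) p s i = 0 := by
  obtain ⟨d, hd⟩ : ∃ d, T = t + 1 + d := ⟨T - (t + 1), by omega⟩
  induction d generalizing t u with
  | zero =>
    exact hopt.netWorthVec_eq_zero_of_succ_eq_zero hα hη he hA hrow ht hu
      (hopt.netWorthVec_succ_eq_zero_of_last hγ hd.symm hu)
  | succ d ih =>
    exact hopt.netWorthVec_eq_zero_of_succ_eq_zero hα hη he hA hrow ht hu
      (hopt.netWorthVec_succ_eq_zero_of_lt (by omega) hu fun u' hopt' hu' =>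
        ih hopt' (by omega) hu' (by omega) (t + 1) (Nat.le_succ _))

end OptimalPro

theorem proRata_nonneg {n : ℕ} {Pbar : Matrix (Fin n) (Fin n) ℝ} (hP : ∀ i j, 0 ≤ Pbar i j)
    (i j : Fin n) : 0 ≤ proRata Pbar i j := by
  unfold proRata
  split_ifs with h
  exacts [div_nonneg (hP i j) h.le, zero_le_one, le_rfl]

theorem sum_proRata_of_pos {n : ℕ} {Pbar : Matrix (Fin n) (Fin n) ℝ} {i : Fin n}
    (h : 0 < ∑ k, Pbar i k) : ∑ j, proRata Pbar i j = 1 := by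
  simp only [proRata, if_pos h, ← sum_div, div_self h.ne']

theorem stmt3_immediate_use_prorata_general (n T : ℕ)
    (α : ℝ) (hα : 1 ≤ α)
    (Pbar : Matrix (Fin n) (Fin n) ℝ)
    (hPbar : ∀ i j, 0 ≤ Pbar i j)
    (pbar : Fin n → ℝ) (hpbar : ∀ i, pbar i = ∑ j, Pbar i j)
    (A : Matrix (Fin n) (Fin n) ℝ) (hA : A = proRata Pbar)
    (e : ℕ → Fin n → ℝ) (he : ∀ t, t < T → ∀ i, 0 ≤ e t i)
    (F : ℕ → ℝ)
    (η γ : ℝ) (hη1 : η < 1) (hγ : 0 < γ)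
    (pstar ustar : ℕ → Fin n → ℝ)
    (hopt : OptimalPro T α η γ pbar A e F pstar ustar) :
    ∀ i : Fin n, ∀ t, t < T → 0 < ustar t i →
      netWorthVec A (fun s i => e s i + ustar s i) pstar (t + 1) i = 0 ∧
      ∀ s, s ≤ t → netWorthVec A (fun s i => e s i + ustar s i) pstar s i = 0 := by
  subst hA
  intro i t ht hu
  have h := hopt.netWorthVec_eq_zero_of_injection_pos hα hη1 hγ he (proRata_nonneg hPbar)
    (fun i hi => sum_proRata_of_pos (hpbar i ▸ hi)) ht hu
  exact ⟨h (t + 1) le_rfl, fun s hs => h s (by omega)⟩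

theorem stmt3_immediate_use_prorata (n T : ℕ) (hn : 1 ≤ n) (hT : 1 ≤ T)
    (α : ℝ) (hα : 1 ≤ α)
    (Pbar : Matrix (Fin n) (Fin n) ℝ)
    (hPbar : ∀ i j, 0 ≤ Pbar i j) (hPdiag : ∀ i, Pbar i i = 0)
    (pbar : Fin n → ℝ) (hpbar : ∀ i, pbar i = ∑ j, Pbar i j)
    (A : Matrix (Fin n) (Fin n) ℝ) (hA : A = proRata Pbar)
    (e : ℕ → Fin n → ℝ) (he : ∀ t, t < T → ∀ i, 0 ≤ e t i)
    (F : ℕ → ℝ) (hF : ∀ t, 0 ≤ F t) (hFmono : ∀ s t, s ≤ t → F s ≤ F t)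
    (η γ : ℝ) (hη0 : 0 ≤ η) (hη1 : η < 1) (hγ : 0 < γ)
    (pstar ustar : ℕ → Fin n → ℝ)
    (hopt : OptimalPro T α η γ pbar A e F pstar ustar) :
    ∀ i : Fin n, ∀ t, t < T → 0 < ustar t i →
      netWorthVec A (fun s i => e s i + ustar s i) pstar (t + 1) i = 0 ∧
      ∀ s, s ≤ t → netWorthVec A (fun s i => e s i + ustar s i) pstar s i = 0 :=
  stmt3_immediate_use_prorata_general n T α hα Pbar hPbar pbar hpbar A hA e he F η γ hη1 hγ pstar
    ustar hopt
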